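/- arXiv:2510.19190 — 7 statements merged into one kernel-verified Lean document; each statement's English description precedes it below -/
import Mathlib

section
/- Let n ≥ 1 be a natural number and let λ, e : Fin (n+1) → ℚ be functions with e i ≠ 0 for every i. If the weighted power sums satisfy S_r = 0 for every r with 0 ≤ r ≤ n − 1, and S_n ≠ 0, then λ is injective (i.e., the n+1 values λ 0, …, λ n are pairwise distinct). -/
open Finset Polynomial

/-- Let `n ≥ 1` and `λ, e : Fin (n+1) → ℚ` with `e i ≠ 0` for all `i`.
If the weighted power sums `S_r = ∑ i, (λ i)^r / e i` vanish for all `0 ≤ r ≤ n - 1`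
and `S_n ≠ 0`, then `λ` is injective. -/
theorem stmt_0 (n : ℕ) (hn : 1 ≤ n) (lam e : Fin (n + 1) → ℚ)
    (he : ∀ i, e i ≠ 0)
    (hvanish : ∀ r : ℕ, r ≤ n - 1 → ∑ i, (lam i) ^ r / e i = 0)
    (htop : ∑ i, (lam i) ^ n / e i ≠ 0) :
    Function.Injective lam := by
  by_contra hni
  set V : Finset ℚ := Finset.univ.image lam with hV
  -- card bound
  have hcard : V.card ≤ n := by
    have h1 : V.card ≤ n + 1 := le_trans Finset.card_image_le (by simp)
    rcases lt_or_eq_of_le h1 with h | h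
    · omega
    · exfalso
      apply hni
      have hinj : Set.InjOn lam (Finset.univ : Finset (Fin (n+1))) :=
        Finset.card_image_iff.mp (by simp [hV] at h ⊢; omega)
      intro a b hab
      exact hinj (by simp) (by simp) hab
  -- polynomials of degree ≤ n-1 give vanishing sums
  have hpoly : ∀ P : ℚ[X], P.natDegree < n → ∑ i, P.eval (lam i) / e i = 0 := by
    intro P hP
    have heval : ∀ i, P.eval (lam i) = ∑ k ∈ Finset.range n, P.coeff k * lam i ^ k := by
      intro i
      exact Polynomial.eval_eq_sum_range' hP (lam i)
    calc ∑ i, P.eval (lam i) / e i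
        = ∑ i, ∑ k ∈ Finset.range n, P.coeff k * (lam i ^ k / e i) := by
          refine Finset.sum_congr rfl fun i _ => ?_
          rw [heval i, Finset.sum_div]
          exact Finset.sum_congr rfl fun k _ => (mul_div_assoc _ _ _)
      _ = ∑ k ∈ Finset.range n, P.coeff k * (∑ i, lam i ^ k / e i) := by
          rw [Finset.sum_comm]
          exact Finset.sum_congr rfl fun k _ => (Finset.mul_sum _ _ _).symm
      _ = 0 := by
          refine Finset.sum_eq_zero fun k hk => ?_
          rw [hvanish k (by simp at hk; omega), mul_zero]
  -- fiber coefficients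
  set c : ℚ → ℚ := fun v => ∑ i ∈ Finset.univ.filter (fun i => lam i = v), 1 / e i with hc
  have hfiber : ∀ f : ℚ → ℚ, ∑ i, f (lam i) / e i = ∑ v ∈ V, f v * c v := by
    intro f
    rw [← Finset.sum_fiberwise_of_maps_to (g := fun i => lam i)
      (fun i _ => Finset.mem_image_of_mem lam (Finset.mem_univ i))]
    refine Finset.sum_congr rfl fun v _ => ?_
    rw [hc, Finset.mul_sum]
    refine Finset.sum_congr rfl fun i hi => ?_
    simp only [Finset.mem_filter] at hi
    rw [hi.2, mul_one_div]
  -- all fiber coefficients vanish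
  have hczero : ∀ v ∈ V, c v = 0 := by
    intro v0 hv0
    set Q : ℚ[X] := ∏ v ∈ V.erase v0, (X - C v) with hQ
    have hmon : Q.Monic := monic_prod_of_monic _ _ fun v _ => monic_X_sub_C v
    have hdeg : Q.natDegree < n := by
      rw [hQ, Polynomial.natDegree_prod_of_monic _ _ fun v _ => monic_X_sub_C v]
      simp only [natDegree_X_sub_C, Finset.sum_const, smul_eq_mul, mul_one]
      have := Finset.card_erase_of_mem hv0
      have hb : 1 ≤ V.card := Finset.card_pos.mpr ⟨v0, hv0⟩
      omega
    have h0 := hpoly Q hdeg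
    rw [hfiber (fun x => Q.eval x)] at h0
    have hsum : ∑ v ∈ V, Q.eval v * c v = Q.eval v0 * c v0 := by
      refine Finset.sum_eq_single v0 (fun v hv hne => ?_) (fun h => absurd hv0 h)
      have : Q.eval v = 0 := by
        rw [hQ, Polynomial.eval_prod]
        exact Finset.prod_eq_zero (Finset.mem_erase.mpr ⟨hne, hv⟩) (by simp)
      rw [this, zero_mul]
    rw [hsum] at h0
    have hQv0 : Q.eval v0 ≠ 0 := by
      rw [hQ, Polynomial.eval_prod]
      refine Finset.prod_ne_zero_iff.mpr fun v hv => ?_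
      have := (Finset.mem_erase.mp hv).1
      simp only [eval_sub, eval_X, eval_C, sub_ne_zero]
      exact fun h => this h.symm
    exact (mul_eq_zero.mp h0).resolve_left hQv0
  -- contradiction with S_n
  apply htop
  rw [hfiber (fun x => x ^ n)]
  exact Finset.sum_eq_zero fun v hv => by rw [hczero v hv, mul_zero]
end

section
/- Let n ≥ 1 be a natural number and let λ, e : Fin (n+1) → ℚ be functions with e i ≠ 0 for every i. If the weighted power sums satisfy S_r = 0 for every r with 0 ≤ r ≤ n − 1, then either λ is injective, or for every index i there exists an index j ≠ i with λ j = λ i (i.e., every value attained by λ is attained at least twice). -/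
/-- Let `n ≥ 1` and `λ, e : Fin (n+1) → ℚ` with `e i ≠ 0` for all `i`.
If the weighted power sums `S_r = ∑ i, (λ i)^r / e i` vanish for all `0 ≤ r ≤ n - 1`,
then either `λ` is injective, or every value attained by `λ` is attained at least twice. -/
theorem stmt_1 (n : ℕ) (hn : 1 ≤ n) (lam e : Fin (n + 1) → ℚ)
    (he : ∀ i, e i ≠ 0)
    (hvanish : ∀ r : ℕ, r ≤ n - 1 → ∑ i, (lam i) ^ r / e i = 0) :
    Function.Injective lam ∨ ∀ i, ∃ j, j ≠ i ∧ lam j = lam i := by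
  by_cases hinj : Function.Injective lam
  · exact Or.inl hinj
  right
  intro i0
  by_contra hcon
  push_neg at hcon
  -- hcon : ∀ j, j ≠ i0 → lam j ≠ lam i0
  set T : Finset ℚ := Finset.image lam Finset.univ with hT
  have hle : T.card ≤ n + 1 := by
    simpa using (Finset.card_image_le (s := (Finset.univ : Finset (Fin (n+1)))) (f := lam))
  have hne : T.card ≠ n + 1 := by
    intro hcard
    apply hinj
    have hinjOn : Set.InjOn lam ((Finset.univ : Finset (Fin (n+1))) : Set (Fin (n+1))) := by
      rw [← Finset.card_image_iff]
      simpa using hcard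
    intro a b hab
    exact hinjOn (by simp) (by simp) hab
  have hTcard : T.card ≤ n := by omega
  have hmem : lam i0 ∈ T := by simp [hT]
  set S : Finset ℚ := T.erase (lam i0) with hS
  have hScard : S.card = T.card - 1 := Finset.card_erase_of_mem hmem
  set Q : Polynomial ℚ := ∏ y ∈ S, (Polynomial.X - Polynomial.C y) with hQ
  have hdeg : Q.natDegree = S.card := by
    rw [hQ, Polynomial.natDegree_prod _ _ (fun y _ => Polynomial.X_sub_C_ne_zero y)]
    simp [Polynomial.natDegree_X_sub_C]
  have hdegn : Q.natDegree ≤ n - 1 := by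
    rw [hdeg, hScard]; omega
  have hevalQ : ∀ x : ℚ, Q.eval x = ∏ y ∈ S, (x - y) := by
    intro x; simp [hQ, Polynomial.eval_prod]
  have heval0 : ∀ i, i ≠ i0 → Q.eval (lam i) = 0 := by
    intro i hi
    have hmemS : lam i ∈ S := by
      refine Finset.mem_erase.mpr ⟨hcon i hi, ?_⟩
      simp [hT]
    rw [hevalQ]
    exact Finset.prod_eq_zero hmemS (by ring)
  have hne0 : Q.eval (lam i0) ≠ 0 := by
    rw [hevalQ]
    refine Finset.prod_ne_zero_iff.mpr fun y hy => ?_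
    have : y ≠ lam i0 := Finset.ne_of_mem_erase hy
    intro hzero
    exact this (by linarith [sub_eq_zero.mp hzero])
  have hsum0 : ∑ i, Q.eval (lam i) / e i = 0 := by
    calc ∑ i, Q.eval (lam i) / e i
        = ∑ i, ∑ r ∈ Finset.range (Q.natDegree + 1), Q.coeff r * lam i ^ r / e i := by
          refine Finset.sum_congr rfl fun i _ => ?_
          rw [Polynomial.eval_eq_sum_range, Finset.sum_div]
      _ = ∑ r ∈ Finset.range (Q.natDegree + 1), ∑ i, Q.coeff r * lam i ^ r / e i :=
          Finset.sum_comm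
      _ = 0 := by
          refine Finset.sum_eq_zero fun r hr => ?_
          have hr' : r ≤ n - 1 := by
            have := Finset.mem_range.mp hr
            omega
          have hv := hvanish r hr'
          calc ∑ i, Q.coeff r * lam i ^ r / e i
              = Q.coeff r * ∑ i, lam i ^ r / e i := by
                rw [Finset.mul_sum]
                exact Finset.sum_congr rfl fun i _ => (mul_div_assoc _ _ _)
            _ = 0 := by rw [hv, mul_zero]
  have hsingle : ∑ i, Q.eval (lam i) / e i = Q.eval (lam i0) / e i0 := by
    refine Finset.sum_eq_single i0 (fun i _ hi => ?_) (by simp)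
    rw [heval0 i hi, zero_div]
  rw [hsingle] at hsum0
  exact hne0 (by
    rcases div_eq_zero_iff.mp hsum0 with h | h
    · exact h
    · exact absurd h (he i0))
end

section
/- Let m ≥ 1 be a natural number, let λ, e : Fin m → ℚ be functions with e i ≠ 0 for every i, and let t be the number of distinct values attained by λ (the cardinality of the image of λ). If the weighted power sums satisfy S_r = 0 for every r with 0 ≤ r ≤ t − 1, then S_r = 0 for every natural number r. -/
open Finset Polynomial

/-- Let `m ≥ 1`, `λ, e : Fin m → ℚ` with `e i ≠ 0` for all `i`, and let
`t` be the number of distinct values attained by `λ`. If the weighted power sums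
`S_r = ∑ i, (λ i)^r / e i` vanish for all `0 ≤ r ≤ t - 1`, then `S_r = 0` for every `r : ℕ`. -/
theorem stmt_2 (m : ℕ) (hm : 1 ≤ m) (lam e : Fin m → ℚ)
    (he : ∀ i, e i ≠ 0)
    (hvanish : ∀ r : ℕ, r ≤ (Finset.image lam Finset.univ).card - 1 →
      ∑ i, (lam i) ^ r / e i = 0) :
    ∀ r : ℕ, ∑ i, (lam i) ^ r / e i = 0 := by
  set T : Finset ℚ := Finset.image lam Finset.univ with hT
  set c : ℚ → ℚ := fun v => ∑ i ∈ Finset.univ.filter (fun i => lam i = v), 1 / e i with hc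
  have hgroup : ∀ r : ℕ, ∑ i, (lam i) ^ r / e i = ∑ v ∈ T, v ^ r * c v := by
    intro r
    rw [← Finset.sum_fiberwise_of_maps_to (g := lam) (fun i _ => Finset.mem_image_of_mem lam (Finset.mem_univ i))]
    refine Finset.sum_congr rfl fun v hv => ?_
    rw [hc, Finset.mul_sum]
    refine Finset.sum_congr rfl fun i hi => ?_
    rw [Finset.mem_filter] at hi
    rw [hi.2]
    field_simp
  have hinj : Set.InjOn (id : ℚ → ℚ) T := fun a _ b _ h => h
  -- each grouped coefficient vanishes
  have hcz : ∀ v ∈ T, c v = 0 := by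
    intro v0 hv0
    have hp := Lagrange.natDegree_basis hinj hv0
    set p : ℚ[X] := Lagrange.basis T id v0 with hpdef
    have key : ∑ v ∈ T, c v * p.eval v = c v0 := by
      have h1 : p.eval v0 = 1 := by simpa using Lagrange.eval_basis_self hinj hv0
      rw [← Finset.add_sum_erase _ _ hv0, h1, Finset.sum_eq_zero, mul_one, add_zero]
      intro v hv
      rw [Finset.mem_erase] at hv
      have := Lagrange.eval_basis_of_ne (v := (id : ℚ → ℚ)) (Ne.symm hv.1) hv.2
      simp only [id_eq] at this
      rw [this, mul_zero]
    have key2 : ∑ v ∈ T, c v * p.eval v = 0 := by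
      have heval : ∀ v : ℚ, p.eval v = ∑ r ∈ Finset.range (T.card - 1 + 1), p.coeff r * v ^ r := by
        intro v
        have hlt : p.natDegree < T.card - 1 + 1 := by omega
        rw [Polynomial.eval_eq_sum_range' hlt]
      calc ∑ v ∈ T, c v * p.eval v
          = ∑ v ∈ T, ∑ r ∈ Finset.range (T.card - 1 + 1), p.coeff r * (c v * v ^ r) := by
            refine Finset.sum_congr rfl fun v _ => ?_
            rw [heval, Finset.mul_sum]
            refine Finset.sum_congr rfl fun r _ => by ring
        _ = ∑ r ∈ Finset.range (T.card - 1 + 1), p.coeff r * ∑ v ∈ T, c v * v ^ r := by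
            rw [Finset.sum_comm]
            exact Finset.sum_congr rfl fun r _ => by rw [Finset.mul_sum]
        _ = 0 := by
            refine Finset.sum_eq_zero fun r hr => ?_
            rw [Finset.mem_range] at hr
            have := hvanish r (by omega)
            rw [hgroup] at this
            have : ∑ v ∈ T, c v * v ^ r = 0 := by
              rw [← this]; exact Finset.sum_congr rfl fun v _ => by ring
            rw [this, mul_zero]
    rw [key2] at key
    exact key.symm
  intro r
  rw [hgroup]
  exact Finset.sum_eq_zero fun v hv => by rw [hcz v hv, mul_zero]
end

section
/- Let n ≥ 1 be a natural number and let k : Fin (n+1) → Fin n → ℤ be such that k i j ≠ 0 for all i, j. For each i set λ i := ∑_{j : Fin n} k i j and e i := ∏_{j : Fin n} k i j (viewed in ℚ). If ∑_{i : Fin (n+1)} (λ i)^r / (e i) = 0 for every r with 0 ≤ r ≤ n − 1, and ∑_{i : Fin (n+1)} (λ i)^n / (e i) = (n+1)^n, then the function i ↦ λ i is injective. -/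
/-- Let `n ≥ 1` and let `k : Fin (n+1) → Fin n → ℤ` consist of nonzero
integers (the weights of the circle action at the `n+1` fixed points). Set
`λ i = ∑ j, k i j` and `e i = ∏ j, k i j` in `ℚ`. If Bott's residue formula holds, i.e.
`∑ i, (λ i)^r / e i = 0` for `0 ≤ r ≤ n - 1` and `∑ i, (λ i)^n / e i = (n+1)^n`, then
`i ↦ λ i` is injective. -/
theorem stmt_4 (n : ℕ) (hn : 1 ≤ n) (k : Fin (n + 1) → Fin n → ℤ)
    (hk : ∀ i j, k i j ≠ 0)
    (hvanish : ∀ r : ℕ, r ≤ n - 1 →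
      ∑ i, (∑ j, (k i j : ℚ)) ^ r / ∏ j, (k i j : ℚ) = 0)
    (htop : ∑ i, (∑ j, (k i j : ℚ)) ^ n / ∏ j, (k i j : ℚ) = (n + 1) ^ n) :
    Function.Injective (fun i => ∑ j, (k i j : ℚ)) := by
  intro a b hab
  simp only at hab
  by_contra hne
  set f : Fin (n + 1) → ℚ := fun i => ∑ j, (k i j : ℚ) with hf
  set E : Fin (n + 1) → ℚ := fun i => ∏ j, (k i j : ℚ) with hE
  have hfab : f a = f b := hab
  set p : Polynomial ℚ := ∏ i ∈ Finset.univ.erase a, (Polynomial.X - Polynomial.C (f i))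
    with hp
  have hmonic : p.Monic :=
    Polynomial.monic_prod_of_monic _ _ (fun i _ => Polynomial.monic_X_sub_C _)
  have hdeg : p.natDegree = n := by
    rw [hp, Polynomial.natDegree_prod]
    · simp [Polynomial.natDegree_X_sub_C, Finset.card_erase_of_mem]
    · intro i _; exact Polynomial.X_sub_C_ne_zero _
  -- each f i is a root of p
  have hzero : ∀ i, p.eval (f i) = 0 := by
    intro i
    rw [hp, Polynomial.eval_prod]
    by_cases hia : i = a
    · apply Finset.prod_eq_zero (i := b)
      · exact Finset.mem_erase.mpr ⟨fun h => hne h.symm, Finset.mem_univ b⟩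
      · simp [hia, hfab]
    · apply Finset.prod_eq_zero (i := i)
      · exact Finset.mem_erase.mpr ⟨hia, Finset.mem_univ i⟩
      · simp
  have hLHS : ∑ i, p.eval (f i) / E i = 0 := by
    simp [hzero]
  have hRHS : ∑ i, p.eval (f i) / E i = (n + 1 : ℚ) ^ n := by
    have heval : ∀ x : ℚ, p.eval x = ∑ r ∈ Finset.range (n + 1), p.coeff r * x ^ r := by
      intro x
      rw [Polynomial.eval_eq_sum_range' (by omega : p.natDegree < n + 1)]
    calc ∑ i, p.eval (f i) / E i
        = ∑ i, ∑ r ∈ Finset.range (n + 1), p.coeff r * (f i ^ r / E i) := by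
          refine Finset.sum_congr rfl fun i _ => ?_
          rw [heval, Finset.sum_div]
          exact Finset.sum_congr rfl fun r _ => (mul_div_assoc _ _ _)
      _ = ∑ r ∈ Finset.range (n + 1), p.coeff r * ∑ i, f i ^ r / E i := by
          rw [Finset.sum_comm]
          exact Finset.sum_congr rfl fun r _ => (Finset.mul_sum _ _ _).symm
      _ = (n + 1 : ℚ) ^ n := by
          rw [Finset.sum_range_succ]
          have h1 : ∀ r ∈ Finset.range n, p.coeff r * ∑ i, f i ^ r / E i = 0 := by
            intro r hr
            rw [hvanish r (by simp at hr; omega), mul_zero]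
          rw [Finset.sum_eq_zero h1, zero_add]
          have hc : p.coeff n = 1 := by
            have := hmonic.leadingCoeff
            rwa [Polynomial.leadingCoeff, hdeg] at this
          rw [hc, one_mul, htop]
  rw [hLHS] at hRHS
  have : (0 : ℚ) < (n + 1 : ℚ) ^ n := by positivity
  rw [← hRHS] at this
  exact lt_irrefl 0 this
end

section
/- Let n ≥ 1. With E_i, T_i and K_j as in the context, the homogeneous component of total degree n of the multivariate power series K_2 equals (1/12)·( (n(3n−5)/2)·e_n + e_1·e_{n−1} ), where e_k denotes the k-th elementary symmetric polynomial in X_1, …, X_n regarded as an element of R (with e_0 = 1). -/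
/-- The homogeneous component of total degree `d` of a multivariate power series
in variables `X_1, …, X_n`: keep exactly the coefficients of monomials of total
degree `d`. -/
noncomputable def homComp (n d : ℕ) (F : MvPowerSeries (Fin n) ℚ) :
    MvPowerSeries (Fin n) ℚ :=
  fun e => if (e.sum fun _ k => k) = d then MvPowerSeries.coeff e F else 0

/-- The `k`-th elementary symmetric polynomial in `X_1, …, X_n`, regarded as an
element of `MvPowerSeries (Fin n) ℚ` (with `e_0 = 1`). -/
noncomputable def esymmPS (n k : ℕ) : MvPowerSeries (Fin n) ℚ :=
  ∑ S ∈ Finset.powersetCard k (Finset.univ : Finset (Fin n)), ∏ i ∈ S, MvPowerSeries.X i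

/-!
`T_i E_i = X_i e^{-X_i} / (1 - e^{-X_i}) = X_i / (e^{X_i} - 1)` is the Bernoulli generating
series evaluated at `X_i`, so its homogeneous parts of degrees `0, 1, 2` are `1, -X_i/2, X_i²/12`.
For `S = {a, b}` the factor `∏_{i ∉ S} X_i` is homogeneous of degree `n - 2`, so the degree-`n`
part of the `S`-summand of `K_2` is this factor times `X_a²/12 + X_a X_b/4 + X_b²/12`.
Summed over all pairs, the mixed terms give `binom(n,2)/4 · e_n`, and the squares give
`1/12 · ∑_{a ≠ b} X_a ∏_{j ≠ b} X_j = 1/12 · (e_1 e_{n-1} - n e_n)`;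
finally `binom(n,2)/4 - n/12 = n(3n-5)/24`.
-/

open Finset

theorem Finset.sum_powersetCard_two_sum_mem {α β : Type*} [DecidableEq α] [AddCommMonoid β]
    (s : Finset α) (f : Finset α → α → β) :
    ∑ S ∈ s.powersetCard 2, ∑ i ∈ S, f S i = ∑ p ∈ s.offDiag, f {p.1, p.2} p.1 := by
  rw [sum_sigma']
  symm
  refine sum_bij (fun p _ => ⟨{p.1, p.2}, p.1⟩) ?_ ?_ ?_ (fun _ _ => rfl)
  · rintro ⟨a, b⟩ h
    simp only [mem_offDiag] at h
    simp [mem_sigma, mem_powersetCard, insert_subset_iff, h.1, h.2.1, card_pair h.2.2]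
  · rintro ⟨a, b⟩ h ⟨a', b'⟩ h' he
    simp only [mem_offDiag] at h h'
    simp only [Sigma.mk.injEq, heq_eq_eq] at he
    obtain ⟨hS, rfl⟩ := he
    have hb : b ∈ ({a, b'} : Finset α) := hS ▸ mem_insert_of_mem (mem_singleton_self b)
    rw [mem_insert, mem_singleton] at hb
    exact Prod.ext rfl (hb.resolve_left h.2.2.symm)
  · rintro ⟨S, i⟩ h
    simp only [mem_sigma, mem_powersetCard] at h
    obtain ⟨⟨hS, hcard⟩, hi⟩ := h
    obtain ⟨x, y, hxy, rfl⟩ := card_eq_two.mp hcard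
    rcases (by simpa using hi : i = x ∨ i = y) with rfl | rfl
    · exact ⟨(i, y), by simp_all [insert_subset_iff], rfl⟩
    · exact ⟨(i, x), by simp_all [insert_subset_iff, hxy.symm], by simp [pair_comm]⟩

namespace MvPowerSeries

variable {σ R : Type*} [CommSemiring R]

theorem homogeneousComponent_mul (p : ℕ) (f g : MvPowerSeries σ R) :
    homogeneousComponent p (f * g) =
      ∑ x ∈ antidiagonal p, homogeneousComponent x.1 f * homogeneousComponent x.2 g := by
  classical
  ext d
  have hinner : ∀ y ∈ antidiagonal d, (∑ x ∈ antidiagonal p,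
      coeff y.1 (homogeneousComponent x.1 f) * coeff y.2 (homogeneousComponent x.2 g)) =
      if d.degree = p then coeff y.1 f * coeff y.2 g else 0 := by
    intro y hy
    rw [HasAntidiagonal.mem_antidiagonal] at hy
    simp only [coeff_homogeneousComponent, ite_mul, zero_mul, mul_ite, mul_zero, ← ite_and]
    rw [← hy, map_add]
    simpa [Prod.ext_iff, eq_comm, and_comm] using
      sum_ite_eq' (antidiagonal p) (y.1.degree, y.2.degree) (fun _ => coeff y.1 f * coeff y.2 g)
  rw [coeff_homogeneousComponent, map_sum]
  simp only [coeff_mul]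
  rw [sum_comm, sum_congr rfl hinner]
  split_ifs <;> simp

theorem isHomogeneous_monomial (d : σ →₀ ℕ) (a : R) :
    (monomial d a).IsHomogeneous d.degree := by
  classical
  intro e he
  rw [coeff_monomial] at he
  split_ifs at he with h
  · rw [h, Finsupp.degree_eq_weight_one]; rfl
  · exact absurd rfl he

theorem isHomogeneous_one : (1 : MvPowerSeries σ R).IsHomogeneous 0 := by
  have h : (monomial (0 : σ →₀ ℕ) (1 : R)).IsHomogeneous (Finsupp.degree 0) :=
    isHomogeneous_monomial 0 1
  rwa [map_zero, monomial_zero_one] at h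

theorem isHomogeneous_X (i : σ) : (X i : MvPowerSeries σ R).IsHomogeneous 1 := by
  have h : (monomial (Finsupp.single i 1) (1 : R)).IsHomogeneous (Finsupp.single i 1).degree :=
    isHomogeneous_monomial _ 1
  rwa [Finsupp.degree_single, ← X_def] at h

theorem isHomogeneous_prod_X (s : Finset σ) :
    (∏ i ∈ s, (X i : MvPowerSeries σ R)).IsHomogeneous s.card := by
  classical
  induction s using Finset.induction_on with
  | empty => rw [prod_empty, card_empty]; exact isHomogeneous_one
  | insert a s ha ih =>
    rw [prod_insert ha, card_insert_of_notMem ha, add_comm]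
    exact IsHomogeneous.mul (isHomogeneous_X a) ih

theorem IsHomogeneous.homogeneousComponent_of_ne {f : MvPowerSeries σ R} {p q : ℕ}
    (hf : f.IsHomogeneous p) (hq : q ≠ p) : homogeneousComponent q f = 0 := by
  ext d
  rw [coeff_homogeneousComponent, map_zero]
  split_ifs with hd
  · exact hf.coeff_eq_zero (hd ▸ hq)
  · rfl

theorem IsHomogeneous.homogeneousComponent_add_mul {f : MvPowerSeries σ R} {p : ℕ}
    (hf : f.IsHomogeneous p) (q : ℕ) (g : MvPowerSeries σ R) :
    homogeneousComponent (p + q) (f * g) = f * homogeneousComponent q g := by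
  rw [homogeneousComponent_mul, sum_eq_single (p, q)]
  · rw [← isHomogeneous_iff_eq_homogeneousComponent.mp hf]
  · rintro ⟨j, k⟩ hjk hne
    rw [HasAntidiagonal.mem_antidiagonal] at hjk
    have hj : j ≠ p := fun h => hne (Prod.ext h (by simp only at hjk ⊢; omega))
    rw [hf.homogeneousComponent_of_ne hj, zero_mul]
  · simp

theorem coeff_rename_unit [DecidableEq σ] (i : σ) (f : PowerSeries R) (d : σ →₀ ℕ) :
    coeff d (rename (fun _ : Unit => i) f) =
      if d = Finsupp.single i (d i) then PowerSeries.coeff (d i) f else 0 := by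
  split_ifs with hd
  · have h := coeff_embDomain_rename (Function.Embedding.punit i) f (Finsupp.single () (d i))
    rw [Finsupp.embDomain_single] at h
    conv_lhs => rw [hd]
    exact h
  · apply coeff_rename_eq_zero
    rintro ⟨x, rfl⟩
    rw [Finsupp.unique_single x, Finsupp.mapDomain_single] at hd
    simp at hd

theorem homogeneousComponent_rename_unit (i : σ) (f : PowerSeries R) (k : ℕ) :
    homogeneousComponent k (rename (fun _ : Unit => i) f) =
      C (PowerSeries.coeff k f) * X i ^ k := by
  classical
  ext d
  rw [coeff_homogeneousComponent, coeff_rename_unit, coeff_C_mul, coeff_X_pow]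
  by_cases hd : d = Finsupp.single i k
  · subst hd; simp
  · simp only [hd, if_false, mul_zero]
    split_ifs with h1 h2 <;> try rfl
    rw [h2, Finsupp.degree_single] at h1
    exact absurd (h1 ▸ h2) hd

theorem rename_unit_X (i : σ) : rename (fun _ : Unit => i) (PowerSeries.X : PowerSeries R) = X i :=
  rename_X _ ()

theorem eq_rename_exp_neg [DecidableEq σ] (i : σ) (E : MvPowerSeries σ ℚ)
    (hE : ∀ d : σ →₀ ℕ, coeff d E =
      if d = Finsupp.single i (d i) then (-1 : ℚ) ^ (d i) / (d i).factorial else 0) :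
    E = rename (fun _ : Unit => i) (PowerSeries.evalNegHom (PowerSeries.exp ℚ)) := by
  ext d
  rw [hE, coeff_rename_unit]
  split_ifs
  · simp [PowerSeries.evalNegHom, PowerSeries.coeff_rescale, div_eq_mul_inv]
  · rfl

theorem todd_mul_exp_neg_eq_rename_bernoulli [DecidableEq σ] (i : σ)
    (E U T : MvPowerSeries σ ℚ)
    (hE : ∀ d : σ →₀ ℕ, coeff d E =
      if d = Finsupp.single i (d i) then (-1 : ℚ) ^ (d i) / (d i).factorial else 0)
    (hU : X i * U = 1 - E) (hT : T * U = 1) :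
    T * E = rename (fun _ : Unit => i) (bernoulliPowerSeries ℚ) := by
  have hB := congrArg (rename (R := ℚ) (fun _ : Unit => i))
    (bernoulliPowerSeries_mul_exp_sub_one ℚ)
  have hexp := congrArg (rename (R := ℚ) (fun _ : Unit => i))
    (PowerSeries.exp_mul_exp_neg_eq_one (A := ℚ))
  rw [map_mul, map_sub, map_one, rename_unit_X] at hB
  rw [map_mul, map_one, ← eq_rename_exp_neg i E hE] at hexp
  generalize rename (fun _ : Unit => i) (bernoulliPowerSeries ℚ) = B at hB ⊢
  have hBU : B * U = E := by
    have hX : X i ∈ nonZeroDivisors (MvPowerSeries σ ℚ) := X_mem_nonzeroDivisors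
    refine (mul_cancel_left_mem_nonZeroDivisors hX).mp ?_
    linear_combination B * hU + E * hB - B * hexp
  rw [← hBU]
  linear_combination B * hT

theorem homogeneousComponent_two_rename_bernoulli_mul (a b : σ) :
    homogeneousComponent 2 (rename (fun _ : Unit => a) (bernoulliPowerSeries ℚ) *
        rename (fun _ : Unit => b) (bernoulliPowerSeries ℚ)) =
      C (1 / 12) * X a ^ 2 + C (1 / 4) * (X a * X b) + C (1 / 12) * X b ^ 2 := by
  rw [homogeneousComponent_mul, Nat.sum_antidiagonal_eq_sum_range_succ_mk]
  simp only [sum_range_succ, sum_range_zero, homogeneousComponent_rename_unit,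
    bernoulliPowerSeries, PowerSeries.coeff_mk, bernoulli_zero, bernoulli_one, bernoulli_two]
  have hC : C (1 / 2 : ℚ) ^ 2 = (C (1 / 4) : MvPowerSeries σ ℚ) := by
    rw [← map_pow]; norm_num
  norm_num [Nat.factorial]
  linear_combination X a * X b * hC

section Fintype

variable [Fintype σ] [DecidableEq σ]

theorem X_sq_mul_prod_compl_pair {a b : σ} (hab : a ≠ b) :
    X a ^ 2 * ∏ j ∈ ({a, b} : Finset σ)ᶜ, (X j : MvPowerSeries σ R) =
      X a * ∏ j ∈ univ.erase b, X j := by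
  rw [← mul_prod_erase (univ.erase b) X (mem_erase.mpr ⟨hab, mem_univ a⟩)]
  have h : (univ.erase b).erase a = ({a, b} : Finset σ)ᶜ := by
    ext j; simp
  rw [h]; ring

theorem homogeneousComponent_prod_compl_X_mul_prod_bernoulli {S : Finset σ} (hS : S.card = 2) :
    homogeneousComponent (Fintype.card σ) ((∏ i ∈ Sᶜ, X i) *
        ∏ i ∈ S, rename (fun _ : Unit => i) (bernoulliPowerSeries ℚ)) =
      C (1 / 12) * ∑ i ∈ S, X i ^ 2 * ∏ j ∈ Sᶜ, X j + C (1 / 4) * ∏ j, X j := by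
  obtain ⟨a, b, hab, rfl⟩ := card_eq_two.mp hS
  have hcard : Fintype.card σ = ({a, b} : Finset σ)ᶜ.card + 2 := by
    rw [card_compl, hS]
    have := card_le_univ ({a, b} : Finset σ)
    omega
  have hfull :
      X a * X b * ∏ j ∈ ({a, b} : Finset σ)ᶜ, X j = ∏ j, (X j : MvPowerSeries σ ℚ) := by
    rw [← prod_pair hab, prod_mul_prod_compl]
  rw [hcard, IsHomogeneous.homogeneousComponent_add_mul (isHomogeneous_prod_X _), prod_pair hab,
    homogeneousComponent_two_rename_bernoulli_mul, sum_pair hab]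
  linear_combination C (1 / 4 : ℚ) * hfull

end Fintype

end MvPowerSeries

open MvPowerSeries

theorem homComp_eq_homogeneousComponent (n d : ℕ) : homComp n d = homogeneousComponent d := by
  funext F
  ext e
  rw [coeff_homogeneousComponent]
  rfl

theorem esymmPS_one (n : ℕ) : esymmPS n 1 = ∑ i, X i := by
  simp [esymmPS, powersetCard_one]

theorem esymmPS_self (n : ℕ) : esymmPS n n = ∏ i, X i := by
  have h := powersetCard_self (univ : Finset (Fin n))
  rw [card_univ, Fintype.card_fin] at h
  rw [esymmPS, h, sum_singleton]

theorem esymmPS_sub_one {n : ℕ} (hn : 1 ≤ n) :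
    esymmPS n (n - 1) = ∑ b, ∏ j ∈ univ.erase b, X j := by
  rw [esymmPS]
  symm
  refine sum_bij (fun b _ => univ.erase b) ?_ ?_ ?_ (fun _ _ => rfl)
  · intro b _
    rw [mem_powersetCard_univ, card_erase_of_mem (mem_univ b), card_univ, Fintype.card_fin]
  · intro a _ b _ h
    exact (erase_inj univ (mem_univ a)).mp h
  · intro S hS
    rw [mem_powersetCard_univ] at hS
    have hc : Sᶜ.card = 1 := by rw [card_compl, hS, Fintype.card_fin]; omega
    obtain ⟨b, hb⟩ := card_eq_one.mp hc
    exact ⟨b, mem_univ b, by rw [← compl_singleton, ← hb, compl_compl]⟩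

theorem esymmPS_one_mul_esymmPS_sub_one {n : ℕ} (hn : 1 ≤ n) :
    esymmPS n 1 * esymmPS n (n - 1) =
      n • esymmPS n n + ∑ p ∈ univ.offDiag, X p.1 * ∏ j ∈ univ.erase p.2, X j := by
  rw [esymmPS_one, esymmPS_sub_one hn, esymmPS_self, sum_mul_sum, ← sum_product',
    ← diag_union_offDiag, sum_union (disjoint_diag_offDiag _), sum_diag]
  simp only [mul_prod_erase univ X (mem_univ _), sum_const, card_univ, Fintype.card_fin]

/-- Lemma 3.4 of the paper. Let `n ≥ 1`, let `E i = exp (-X i)` in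
`R = MvPowerSeries (Fin n) ℚ` and let `T i` be the multiplicative inverse of the power
series `U i = (1 - E i)/X i` (Todd series). With
`K_j = ∑_{|S| = j} (∏_{i ∉ S} X i) * (∏_{i ∈ S} T i * E i)`, the homogeneous component
of total degree `n` of `K_2` equals `(1/12) * ((n(3n-5)/2) * e_n + e_1 * e_{n-1})`. -/
theorem stmt_5 (n : ℕ) (hn : 1 ≤ n)
    (E U T : Fin n → MvPowerSeries (Fin n) ℚ)
    (hE : ∀ (i : Fin n) (d : Fin n →₀ ℕ), MvPowerSeries.coeff d (E i) =
      if d = Finsupp.single i (d i) then (-1 : ℚ) ^ (d i) / (Nat.factorial (d i) : ℚ) else 0)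
    (hU : ∀ i, MvPowerSeries.X i * U i = 1 - E i)
    (hT : ∀ i, T i * U i = 1) :
    homComp n n
        (∑ S ∈ Finset.powersetCard 2 (Finset.univ : Finset (Fin n)),
          (∏ i ∈ Sᶜ, MvPowerSeries.X i) * ∏ i ∈ S, T i * E i)
      = MvPowerSeries.C (σ := Fin n) (R := ℚ) (1 / 12) *
          (MvPowerSeries.C (σ := Fin n) (R := ℚ) ((n : ℚ) * (3 * (n : ℚ) - 5) / 2) * esymmPS n n
            + esymmPS n 1 * esymmPS n (n - 1)) := by
  have hTE : ∀ i, T i * E i = rename (fun _ : Unit => i) (bernoulliPowerSeries ℚ) :=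
    fun i => todd_mul_exp_neg_eq_rename_bernoulli i (E i) (U i) (T i) (hE i) (hU i) (hT i)
  have hterm : ∀ S ∈ powersetCard 2 (univ : Finset (Fin n)),
      homogeneousComponent n ((∏ i ∈ Sᶜ, X i) * ∏ i ∈ S, T i * E i) =
        C (1 / 12) * ∑ i ∈ S, X i ^ 2 * ∏ j ∈ Sᶜ, X j + C (1 / 4) * ∏ j, X j := by
    intro S hS
    simpa only [hTE, Fintype.card_fin] using
      homogeneousComponent_prod_compl_X_mul_prod_bernoulli (mem_powersetCard_univ.mp hS)
  have hpair : ∀ p ∈ (univ : Finset (Fin n)).offDiag,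
      X p.1 ^ 2 * ∏ j ∈ {p.1, p.2}ᶜ, X j =
        X p.1 * ∏ j ∈ univ.erase p.2, (X j : MvPowerSeries (Fin n) ℚ) :=
    fun p hp => X_sq_mul_prod_compl_pair (mem_offDiag.mp hp).2.2
  have hC : (n.choose 2 : MvPowerSeries (Fin n) ℚ) * C (1 / 4) =
      C (1 / 12) * C ((n : ℚ) * (3 * n - 5) / 2) +
        C (1 / 12) * (n : MvPowerSeries (Fin n) ℚ) := by
    rw [← map_natCast C, ← map_natCast C n, ← map_mul, ← map_mul, ← map_mul, ← map_add,
      Nat.cast_choose_two]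
    congr 1
    ring
  rw [homComp_eq_homogeneousComponent, map_sum, sum_congr rfl hterm, sum_add_distrib, ← mul_sum,
    sum_powersetCard_two_sum_mem, sum_congr rfl hpair, sum_const, card_powersetCard, card_univ,
    Fintype.card_fin, ← esymmPS_self, esymmPS_one_mul_esymmPS_sub_one hn]
  simp only [nsmul_eq_mul]
  linear_combination esymmPS n n * hC
end

section
/- Let n ≥ 2 be an integer and let p, q, p', q' be integers satisfying: p = p' + 1, q = n + q', 2·p·q = n·(n+1)^2, 2·p'·q' = (n−1)·n^2, and p ≡ n + 1 (mod 2). Then either (p = n + 1 and p' = n), or (n ≡ 3 (mod 4), 2p = n + 1 and 2p' = n − 1). -/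
/-- arithmetic core of Proposition 3.7. Let `n ≥ 2` and let
`p, q, p', q'` be integers with `p = p' + 1`, `q = n + q'`, `2pq = n(n+1)^2`,
`2p'q' = (n-1)n^2`, and `p ≡ n + 1 (mod 2)`. Then either `p = n + 1` and `p' = n`,
or `n ≡ 3 (mod 4)`, `2p = n + 1` and `2p' = n - 1`. -/
theorem stmt_9 (n p q p' q' : ℤ) (hn : 2 ≤ n)
    (h1 : p = p' + 1) (h2 : q = n + q')
    (h3 : 2 * p * q = n * (n + 1) ^ 2)
    (h4 : 2 * p' * q' = (n - 1) * n ^ 2)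
    (h5 : p ≡ n + 1 [ZMOD 2]) :
    (p = n + 1 ∧ p' = n) ∨ (n ≡ 3 [ZMOD 4] ∧ 2 * p = n + 1 ∧ 2 * p' = n - 1) := by
  subst h1 h2
  have hq : 2 * (p' + 1) * n + 2 * (n + q') = 3 * n ^ 2 + 3 * n := by
    linear_combination h3 - h4
  have key : n * ((2 * (p' + 1) - (n + 1)) * ((p' + 1) - (n + 1))) = 0 := by
    linear_combination (p' + 1) * hq - h3
  have hn0 : n ≠ 0 := by omega
  rcases mul_eq_zero.mp key with h | h
  · exact absurd h hn0
  rcases mul_eq_zero.mp h with h | h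
  · right
    have h5' : (p' + 1) % 2 = (n + 1) % 2 := h5
    refine ⟨show n % 4 = 3 % 4 by omega, by omega, by omega⟩
  · left
    constructor <;> omega
end

section
/- Let n ≥ 1 be a natural number, let a : Fin (n+1) → ℤ be injective, let c ∈ ℤ, and let σ : Fin n → Fin (n+1) be a function with σ i ≠ Fin.castSucc i for every i : Fin n. Suppose that for every i : Fin n, ∑_{j : Fin (n+1), j ≠ Fin.castSucc i, j ≠ σ i} ( a (Fin.castSucc i) − a j ) = n · a (Fin.castSucc i) + c. Then σ i = Fin.last n for every i : Fin n, and c = − ∑_{i : Fin n} a (Fin.castSucc i). -/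
/-!
Summing `a i - a j` over all `j` gives `(n + 1) a i - S` with `S = ∑ j, a j`; the two omitted
terms are `0` (at `j = i`) and `a i - a (σ i)`. The hypothesis therefore says exactly that
`a (σ i) = S + c` for every `i`, so by injectivity `σ` is constant. A constant value `castSucc k`
would contradict `σ k ≠ castSucc k`, hence `σ ≡ last n`, and `a (last n) = S + c` gives `c`.
-/

open Finset

theorem sum_filter_ne_ne_sub_add_sub {ι M : Type*} [Fintype ι] [DecidableEq ι] [AddCommGroup M]
    (a : ι → M) {i k : ι} (hik : i ≠ k) :
    ∑ j ∈ univ.filter (fun j => j ≠ i ∧ j ≠ k), (a i - a j) + (a i - a k) =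
      Fintype.card ι • a i - ∑ j, a j := by
  have hfilter : univ.filter (fun j => j ≠ i ∧ j ≠ k) = (univ.erase i).erase k := by
    ext j
    simp [and_comm]
  rw [hfilter, sum_erase_add _ _ (mem_erase.2 ⟨hik.symm, mem_univ k⟩),
    Finset.sum_erase univ (f := fun j => a i - a j) (sub_self (a i)), sum_sub_distrib,
    sum_const, card_univ]

theorem Fin.eq_last_of_forall_eq_of_ne_castSucc {n : ℕ} {σ : Fin n → Fin (n + 1)}
    (hσ : ∀ i, σ i ≠ Fin.castSucc i) (hconst : ∀ i i', σ i = σ i') (i : Fin n) :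
    σ i = Fin.last n := by
  rcases Fin.eq_castSucc_or_eq_last (σ i) with ⟨k, hk⟩ | hk
  · exact absurd ((hconst k i).trans hk) (hσ k)
  · exact hk

/-- combinatorial core of Lemma 5.2. Let `n ≥ 1`, let
`a : Fin (n+1) → ℤ` be injective, let `c : ℤ`, and let `σ : Fin n → Fin (n+1)` satisfy
`σ i ≠ Fin.castSucc i` for all `i`. If for every `i : Fin n` the sum of
`a (Fin.castSucc i) - a j` over all `j` different from both `Fin.castSucc i` and `σ i`
equals `n * a (Fin.castSucc i) + c`, then `σ i = Fin.last n` for every `i` and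
`c = - ∑ i, a (Fin.castSucc i)`. -/
theorem stmt_10 (n : ℕ) (hn : 1 ≤ n) (a : Fin (n + 1) → ℤ)
    (ha : Function.Injective a) (c : ℤ) (σ : Fin n → Fin (n + 1))
    (hσ : ∀ i : Fin n, σ i ≠ Fin.castSucc i)
    (h : ∀ i : Fin n,
      ∑ j ∈ Finset.univ.filter (fun j : Fin (n + 1) => j ≠ Fin.castSucc i ∧ j ≠ σ i),
        (a (Fin.castSucc i) - a j) = n * a (Fin.castSucc i) + c) :
    (∀ i : Fin n, σ i = Fin.last n) ∧ c = -∑ i : Fin n, a (Fin.castSucc i) := by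
  have hσ_value : ∀ i, a (σ i) = ∑ j, a j + c := by
    intro i
    have hsum := sum_filter_ne_ne_sub_add_sub a (hσ i).symm
    rw [h i, Fintype.card_fin, nsmul_eq_mul] at hsum
    push_cast at hsum
    linarith
  have hlast : ∀ i, σ i = Fin.last n :=
    Fin.eq_last_of_forall_eq_of_ne_castSucc hσ fun i i' ↦
      ha ((hσ_value i).trans (hσ_value i').symm)
  refine ⟨hlast, ?_⟩
  have hc := hσ_value ⟨0, hn⟩
  rw [hlast, Fin.sum_univ_castSucc] at hc
  linarith
end
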